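/- arXiv:1510.05455 — 2 statements merged into one kernel-verified Lean document; each statement's English description precedes it below -/
import Mathlib

section
/- Let v be a radial weight in the class D̂ satisfying M₂(v) = sup_{0<r<1} (∫₀^r v̂(s)/(1-s)⁴ ds)^{1/2} (∫_r¹ (1-s)²/v̂(s) ds)^{1/2} < ∞. Then there exists γ = γ(v) ∈ (0,1) such that ∫_{(1+r)/2}^1 (1-s)²/v̂(s) ds ≤ γ · ∫_r^1 (1-s)²/v̂(s) ds for all r ∈ (0,1). -/
open MeasureTheory Real Set Filter

noncomputable section

/-- `hatw v r = ∫_r^1 v(s) ds`. -/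
def hatw (v : ℝ → ℝ) (r : ℝ) : ℝ := ∫ s in r..1, v s

/-- A radial weight: measurable, positive on `[0,1)`, integrable on `(0,1)`. -/
def RadialWeight (v : ℝ → ℝ) : Prop :=
  Measurable v ∧ (∀ r ∈ Set.Ico (0:ℝ) 1, 0 < v r) ∧
    MeasureTheory.IntegrableOn v (Set.Ioo 0 1)

/-- Membership in the class `D̂`. -/
def DoublingD (v : ℝ → ℝ) : Prop :=
  ∃ C : ℝ, 1 ≤ C ∧ ∀ r ∈ Set.Ico (0:ℝ) 1, hatw v r ≤ C * hatw v ((1+r)/2)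

/-- Squared Dirichlet-type norm `‖f‖_{D_v}^2`. -/
def DvSq (v : ℝ → ℝ) (f : ℂ → ℂ) : ENNReal :=
  (‖f 0‖₊ : ENNReal)^2 +
    (ENNReal.ofReal Real.pi)⁻¹ *
      ∫⁻ z in Metric.ball (0:ℂ) 1, (‖deriv f z‖₊ : ENNReal)^2 * ENNReal.ofReal (v ‖z‖)

/-- The Muckenhoupt type quantity `M₁(v)`. -/
def M1v (v : ℝ → ℝ) : ENNReal :=
  ⨆ r ∈ Set.Ioo (0:ℝ) 1,
    (∫⁻ s in Set.Ioo r 1, ENNReal.ofReal (hatw v s / (1-s)^2)) ^ (1/2 : ℝ) *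
    (∫⁻ s in Set.Ioo (0:ℝ) r, ENNReal.ofReal (1 / hatw v s)) ^ (1/2 : ℝ)

/-- The Muckenhoupt type quantity `M₂(v)`. -/
def M2v (v : ℝ → ℝ) : ENNReal :=
  ⨆ r ∈ Set.Ioo (0:ℝ) 1,
    (∫⁻ s in Set.Ioo (0:ℝ) r, ENNReal.ofReal (hatw v s / (1-s)^4)) ^ (1/2 : ℝ) *
    (∫⁻ s in Set.Ioo r 1, ENNReal.ofReal ((1-s)^2 / hatw v s)) ^ (1/2 : ℝ)

/-- The moment `v_x = ∫_0^1 s^x v(s) ds`. -/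
def vx (v : ℝ → ℝ) (x : ℕ) : ℝ := ∫ s in (0:ℝ)..1, s^x * v s

/-- `M_∞(s,f)`, the maximum of `|f|` on the circle of radius `s`. -/
def Minf (f : ℂ → ℂ) (s : ℝ) : ℝ := sSup ((fun z => ‖f z‖) '' Metric.sphere (0:ℂ) s)

/-- `M₂(r,h)`. -/
def M2mean (h : ℂ → ℂ) (r : ℝ) : ℝ :=
  Real.sqrt ((2*Real.pi)⁻¹ * ∫ θ in (-Real.pi)..Real.pi, ‖h ((r:ℂ) * Complex.exp (θ * Complex.I))‖^2)

/-- The norm of `B(2,∞)` (with values in `[0,∞]`). -/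
def B2infE (g : ℂ → ℂ) : ENNReal :=
  (‖g 0‖₊ : ENNReal) +
    ⨆ r ∈ Set.Ioo (0:ℝ) 1, ENNReal.ofReal (M2mean (deriv g) r * Real.sqrt (1-r))

/-- The `p`-th power of the norm of `B(2,p)` (with values in `[0,∞]`). -/
def B2pE (p : ℝ) (g : ℂ → ℂ) : ENNReal :=
  ENNReal.ofReal (‖g 0‖ ^ p) +
    ∫⁻ r in Set.Ioo (0:ℝ) 1, ENNReal.ofReal (M2mean (deriv g) r ^ p * (1-r)^(p/2-1))

/-- The generalized Hilbert operator `H_g`. -/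
def Hg (g f : ℂ → ℂ) (z : ℂ) : ℂ := ∫ t in Set.Ioo (0:ℝ) 1, f t * deriv g (t * z)

/-- The Hilbert operator `H` acting on functions on `[0,1)`. -/
def Hop (φ : ℝ → ℂ) (z : ℂ) : ℂ := ∫ t in Set.Ioo (0:ℝ) 1, φ t / (1 - t * z)

/-- The sublinear Hilbert operator `H̃`. -/
def Htil (φ : ℝ → ℂ) (z : ℂ) : ℂ := ∫ t in Set.Ioo (0:ℝ) 1, (‖φ t‖ : ℂ) / (1 - t * z)

/-- Squared norm in `L²_{V̂₂}`. -/
def L2V2sq (v : ℝ → ℝ) (φ : ℝ → ℂ) : ENNReal :=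
  ∫⁻ t in Set.Ioo (0:ℝ) 1, (‖φ t‖₊ : ENNReal)^2 * ENNReal.ofReal (hatw v t / (1-t)^2)

/-- Taylor coefficient `ĝ(k)` of `g` at the origin. -/
def gcoef (g : ℂ → ℂ) (k : ℕ) : ℂ := iteratedDeriv k g 0 / (Nat.factorial k)

/-!
Write `Φ(r) = ∫_r^1 (1-s)²/v̂(s) ds`. Since `v̂` is decreasing, the piece of `Φ(r)` over
`(r, (1+r)/2)` is at least `(1-r)³/(8 v̂(r))`. Conversely `Φ(r) ≤ K (1-r)³/v̂(r)` for all `r`: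
for `r ≥ 1/2` because `∫_0^r v̂(s)/(1-s)⁴ ds ≥ v̂(r)/(16 (1-r)³)` while the product of this
integral with `Φ(r)` is at most `M₂(v)²`, and for `r < 1/2` because `Φ(0) < ∞`. So the piece over
`(r, (1+r)/2)` is at least `Φ(r)/(8K)`, and `γ = 1 - 1/(8K)` works.
-/

open scoped ENNReal

lemma setLIntegral_Ioo_eq_add {f : ℝ → ℝ≥0∞} {a m b : ℝ} (ham : a ≤ m) (hmb : m ≤ b) :
    ∫⁻ s in Ioo a b, f s = (∫⁻ s in Ioo a m, f s) + ∫⁻ s in Ioo m b, f s := by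
  simp only [setLIntegral_congr (Ioo_ae_eq_Ioc (μ := volume))]
  rw [← Ioc_union_Ioc_eq_Ioc ham hmb,
    lintegral_union measurableSet_Ioc (Ioc_disjoint_Ioc_of_le le_rfl)]

lemma ofReal_mul_le_setLIntegral_Ioo {f : ℝ → ℝ} {a b c : ℝ} (hc : 0 ≤ c)
    (h : ∀ s ∈ Ioo a b, c ≤ f s) :
    ENNReal.ofReal (c * (b - a)) ≤ ∫⁻ s in Ioo a b, ENNReal.ofReal (f s) :=
  calc ENNReal.ofReal (c * (b - a)) = ∫⁻ _ in Ioo a b, ENNReal.ofReal c := by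
        rw [setLIntegral_const, Real.volume_Ioo, ENNReal.ofReal_mul hc]
    _ ≤ _ := setLIntegral_mono' measurableSet_Ioo fun s hs => ENNReal.ofReal_le_ofReal (h s hs)

lemma setLIntegral_Ioo_le_ofReal_mul {f : ℝ → ℝ} {a b c : ℝ} (h : ∀ s ∈ Ioo a b, f s ≤ c) :
    ∫⁻ s in Ioo a b, ENNReal.ofReal (f s) ≤ ENNReal.ofReal c * ENNReal.ofReal (b - a) :=
  calc ∫⁻ s in Ioo a b, ENNReal.ofReal (f s) ≤ ∫⁻ _ in Ioo a b, ENNReal.ofReal c :=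
        setLIntegral_mono' measurableSet_Ioo fun s hs => ENNReal.ofReal_le_ofReal (h s hs)
    _ = _ := by rw [setLIntegral_const, Real.volume_Ioo]

lemma ENNReal.le_ofReal_one_sub_mul_of_eq_add {x a y : ℝ≥0∞} {δ : ℝ} (hx : x ≠ ∞)
    (hxay : x = a + y) (hδ : 0 ≤ δ) (ha : ENNReal.ofReal δ * x ≤ a) :
    y ≤ ENNReal.ofReal (1 - δ) * x :=
  calc y = x - a := ENNReal.eq_sub_of_add_eq (ne_top_of_le_ne_top hx (by simp [hxay]))
        (by rw [hxay, add_comm])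
    _ ≤ x - ENNReal.ofReal δ * x := tsub_le_tsub_left ha x
    _ = ENNReal.ofReal (1 - δ) * x := by
        rw [ENNReal.ofReal_sub 1 hδ, ENNReal.sub_mul fun _ _ => hx, ENNReal.ofReal_one, one_mul]

def M2head (v : ℝ → ℝ) (r : ℝ) : ℝ≥0∞ :=
  ∫⁻ s in Ioo (0:ℝ) r, ENNReal.ofReal (hatw v s / (1 - s) ^ 4)

def M2tail (v : ℝ → ℝ) (r : ℝ) : ℝ≥0∞ :=
  ∫⁻ s in Ioo r 1, ENNReal.ofReal ((1 - s) ^ 2 / hatw v s)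

lemma M2head_mul_M2tail_le_M2v_sq (v : ℝ → ℝ) {r : ℝ} (hr : r ∈ Ioo 0 1) :
    M2head v r * M2tail v r ≤ M2v v ^ 2 := by
  have h : M2head v r ^ (1/2 : ℝ) * M2tail v r ^ (1/2 : ℝ) ≤ M2v v :=
    le_biSup (fun r => M2head v r ^ (1/2 : ℝ) * M2tail v r ^ (1/2 : ℝ)) hr
  calc M2head v r * M2tail v r = (M2head v r ^ (1/2 : ℝ) * M2tail v r ^ (1/2 : ℝ)) ^ 2 := by
        rw [← ENNReal.mul_rpow_of_nonneg _ _ (by norm_num), ← ENNReal.rpow_natCast,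
          ← ENNReal.rpow_mul]
        norm_num
    _ ≤ M2v v ^ 2 := pow_le_pow_left' h 2

namespace RadialWeight

variable {v : ℝ → ℝ}

lemma intervalIntegrable (hv : RadialWeight v) {a b : ℝ} (ha : 0 ≤ a) (hab : a ≤ b)
    (hb : b ≤ 1) : IntervalIntegrable v volume a b := by
  refine (((integrableOn_Icc_iff_integrableOn_Ioo).mpr hv.2.2).mono_set ?_).intervalIntegrable
  rw [uIcc_of_le hab]
  exact Icc_subset_Icc ha hb

lemma hatw_strictAntiOn (hv : RadialWeight v) : StrictAntiOn (hatw v) (Icc 0 1) := by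
  intro a ha b hb hab
  have hsplit := intervalIntegral.integral_add_adjacent_intervals
    (hv.intervalIntegrable ha.1 hab.le hb.2) (hv.intervalIntegrable hb.1 hb.2 le_rfl)
  have hpos : 0 < ∫ s in a..b, v s :=
    intervalIntegral.intervalIntegral_pos_of_pos_on (hv.intervalIntegrable ha.1 hab.le hb.2)
      (fun s hs => hv.2.1 s ⟨ha.1.trans hs.1.le, hs.2.trans_le hb.2⟩) hab
  unfold hatw
  linarith

lemma hatw_pos (hv : RadialWeight v) {r : ℝ} (h0 : 0 ≤ r) (h1 : r < 1) : 0 < hatw v r := by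
  simpa [hatw] using hv.hatw_strictAntiOn ⟨h0, h1.le⟩ ⟨zero_le_one, le_rfl⟩ h1

lemma hatw_le_hatw (hv : RadialWeight v) {a b : ℝ} (ha : 0 ≤ a) (hab : a ≤ b) (hb : b ≤ 1) :
    hatw v b ≤ hatw v a :=
  hv.hatw_strictAntiOn.antitoneOn ⟨ha, hab.trans hb⟩ ⟨ha.trans hab, hb⟩ hab

lemma ofReal_div_le_setLIntegral_Ioo_midpoint (hv : RadialWeight v) {r : ℝ} (h0 : 0 ≤ r)
    (h1 : r < 1) :
    ENNReal.ofReal ((1 - r) ^ 3 / (8 * hatw v r)) ≤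
      ∫⁻ s in Ioo r ((1 + r) / 2), ENNReal.ofReal ((1 - s) ^ 2 / hatw v s) := by
  have hr := hv.hatw_pos h0 h1
  have heq : (1 - r) ^ 3 / (8 * hatw v r) = ((1 - r) / 2) ^ 2 / hatw v r * ((1 + r) / 2 - r) := by
    field_simp; ring
  rw [heq]
  refine ofReal_mul_le_setLIntegral_Ioo (by positivity) fun s ⟨hrs, hs⟩ => ?_
  have hs1 : s < 1 := by linarith
  have hnum : ((1 - r) / 2) ^ 2 ≤ (1 - s) ^ 2 := by nlinarith
  exact div_le_div₀ (sq_nonneg _) hnum (hv.hatw_pos (h0.trans hrs.le) hs1)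
    (hv.hatw_le_hatw h0 hrs.le hs1.le)

lemma ofReal_div_le_M2head (hv : RadialWeight v) {r : ℝ} (h0 : 1 / 2 ≤ r) (h1 : r < 1) :
    ENNReal.ofReal (hatw v r / (16 * (1 - r) ^ 3)) ≤ M2head v r := by
  have hr := hv.hatw_pos (by linarith) h1
  have heq : hatw v r / (16 * (1 - r) ^ 3) = hatw v r / (16 * (1 - r) ^ 4) * (r - (2 * r - 1)) := by
    have : 0 < 1 - r := by linarith
    field_simp; ring
  rw [heq]
  refine le_trans ?_ (lintegral_mono_set (Ioo_subset_Ioo_left (by linarith : (0:ℝ) ≤ 2 * r - 1)))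
  refine ofReal_mul_le_setLIntegral_Ioo (by positivity) fun s ⟨hrs, hs⟩ => ?_
  have hden : (1 - s) ^ 4 ≤ 16 * (1 - r) ^ 4 := by
    have := pow_le_pow_left₀ (by linarith : 0 ≤ 1 - s) (by linarith : 1 - s ≤ 2 * (1 - r)) 4
    linarith
  have hle := hv.hatw_le_hatw (by linarith) hs.le h1.le
  exact div_le_div₀ (hr.le.trans hle) hle (pow_pos (by linarith) 4) hden

lemma M2tail_le_of_M2v_ne_top (hv : RadialWeight v) (hM : M2v v ≠ ⊤) {r : ℝ} (h0 : 1 / 2 ≤ r)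
    (h1 : r < 1) :
    M2tail v r ≤ ENNReal.ofReal (16 * (M2v v).toReal ^ 2 * ((1 - r) ^ 3 / hatw v r)) := by
  have hr := hv.hatw_pos (by linarith) h1
  have h1r : 0 < 1 - r := by linarith
  have ha : 0 < hatw v r / (16 * (1 - r) ^ 3) := by positivity
  have hprod : ENNReal.ofReal (hatw v r / (16 * (1 - r) ^ 3)) * M2tail v r ≤
      ENNReal.ofReal ((M2v v).toReal ^ 2) := by
    rw [ENNReal.ofReal_pow ENNReal.toReal_nonneg, ENNReal.ofReal_toReal hM]
    exact (mul_le_mul_left (hv.ofReal_div_le_M2head h0 h1) _).trans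
      (M2head_mul_M2tail_le_M2v_sq v ⟨by linarith, h1⟩)
  have heq : 16 * (M2v v).toReal ^ 2 * ((1 - r) ^ 3 / hatw v r) =
      (M2v v).toReal ^ 2 / (hatw v r / (16 * (1 - r) ^ 3)) := by
    field_simp
  rw [heq, ENNReal.ofReal_div_of_pos ha, ENNReal.le_div_iff_mul_le (by simp [ha]) (by simp),
    mul_comm]
  exact hprod

lemma M2tail_zero_ne_top (hv : RadialWeight v) (hM : M2v v ≠ ⊤) : M2tail v 0 ≠ ⊤ := by
  have hhalf := hv.hatw_pos (r := 1 / 2) (by norm_num) (by norm_num)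
  have hlow : ∫⁻ s in Ioo 0 (1 / 2), ENNReal.ofReal ((1 - s) ^ 2 / hatw v s) ≤
      ENNReal.ofReal (1 / hatw v (1 / 2)) * ENNReal.ofReal (1 / 2 - 0) := by
    refine setLIntegral_Ioo_le_ofReal_mul fun s ⟨hs0, hs⟩ => ?_
    have hnum : (1 - s) ^ 2 ≤ 1 := by nlinarith
    exact div_le_div₀ zero_le_one hnum hhalf (hv.hatw_le_hatw hs0.le hs.le (by norm_num))
  have hhigh := hv.M2tail_le_of_M2v_ne_top hM le_rfl (by norm_num)
  rw [M2tail, setLIntegral_Ioo_eq_add (by norm_num : (0:ℝ) ≤ 1 / 2) (by norm_num)]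
  exact ENNReal.add_ne_top.mpr ⟨ne_top_of_le_ne_top (by finiteness) hlow,
    ne_top_of_le_ne_top ENNReal.ofReal_ne_top hhigh⟩

lemma exists_M2tail_le (hv : RadialWeight v) (hM : M2v v ≠ ⊤) :
    ∃ K : ℝ, 1 ≤ K ∧ ∀ r ∈ Ico (0:ℝ) 1,
      M2tail v r ≤ ENNReal.ofReal (K * ((1 - r) ^ 3 / hatw v r)) := by
  set M := (M2v v).toReal
  set T := (M2tail v 0).toReal
  have hT : 0 ≤ T := ENNReal.toReal_nonneg
  have hv0 := hv.hatw_pos le_rfl zero_lt_one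
  have hK : 16 * M ^ 2 ≤ 16 * M ^ 2 + 8 * hatw v 0 * T + 1 := by
    have : 0 ≤ 8 * hatw v 0 * T := by positivity
    linarith
  refine ⟨16 * M ^ 2 + 8 * hatw v 0 * T + 1, by nlinarith, fun r ⟨h0, h1⟩ => ?_⟩
  have hr := hv.hatw_pos h0 h1
  have hq : 0 ≤ (1 - r) ^ 3 / hatw v r := div_nonneg (pow_nonneg (by linarith) 3) hr.le
  rcases le_or_gt (1 / 2) r with hr2 | hr2
  · exact (hv.M2tail_le_of_M2v_ne_top hM hr2 h1).trans
      (ENNReal.ofReal_le_ofReal (mul_le_mul_of_nonneg_right hK hq))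
  · have hq8 : 1 ≤ 8 * hatw v 0 * ((1 - r) ^ 3 / hatw v r) := by
      have hcube : (1 / 2) ^ 3 ≤ (1 - r) ^ 3 := pow_le_pow_left₀ (by norm_num) (by linarith) 3
      rw [← mul_div_assoc, le_div_iff₀ hr]
      nlinarith [hv.hatw_le_hatw le_rfl h0 h1.le]
    calc M2tail v r ≤ M2tail v 0 := lintegral_mono_set (Ioo_subset_Ioo_left h0)
      _ = ENNReal.ofReal T := (ENNReal.ofReal_toReal (hv.M2tail_zero_ne_top hM)).symm
      _ ≤ _ := ENNReal.ofReal_le_ofReal (by nlinarith)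

end RadialWeight

theorem statement13_general (v : ℝ → ℝ) (hv : RadialWeight v)
    (hM2 : M2v v < ⊤) :
    ∃ γ : ℝ, 0 < γ ∧ γ < 1 ∧ ∀ r ∈ Set.Ioo (0:ℝ) 1,
      ∫⁻ s in Set.Ioo ((1+r)/2) 1, ENNReal.ofReal ((1-s)^2 / hatw v s) ≤
        ENNReal.ofReal γ * ∫⁻ s in Set.Ioo r 1, ENNReal.ofReal ((1-s)^2 / hatw v s) := by
  obtain ⟨K, hK, htail⟩ := hv.exists_M2tail_le hM2.ne
  have hK8 : 0 < (8 * K)⁻¹ ∧ (8 * K)⁻¹ < 1 :=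
    ⟨by positivity, inv_lt_one_of_one_lt₀ (by linarith)⟩
  refine ⟨1 - (8 * K)⁻¹, by linarith, by linarith, fun r ⟨hr0, hr1⟩ => ?_⟩
  have hr := hv.hatw_pos hr0.le hr1
  refine ENNReal.le_ofReal_one_sub_mul_of_eq_add
    (ne_top_of_le_ne_top ENNReal.ofReal_ne_top (htail r ⟨hr0.le, hr1⟩))
    (setLIntegral_Ioo_eq_add (by linarith) (by linarith)) hK8.1.le ?_
  calc ENNReal.ofReal (8 * K)⁻¹ * M2tail v r
      ≤ ENNReal.ofReal (8 * K)⁻¹ * ENNReal.ofReal (K * ((1 - r) ^ 3 / hatw v r)) := by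
        gcongr
        exact htail r ⟨hr0.le, hr1⟩
    _ = ENNReal.ofReal ((1 - r) ^ 3 / (8 * hatw v r)) := by
        rw [← ENNReal.ofReal_mul hK8.1.le]
        congr 1
        field_simp
    _ ≤ _ := hv.ofReal_div_le_setLIntegral_Ioo_midpoint hr0.le hr1

/-- inequality (3.4): if `v ∈ D̂` and `M₂(v) < ∞`, there is `γ ∈ (0,1)` with
`∫_{(1+r)/2}^1 (1-s)²/v̂(s) ds ≤ γ ∫_r^1 (1-s)²/v̂(s) ds` for all `r ∈ (0,1)`. -/
theorem statement13 (v : ℝ → ℝ) (hv : RadialWeight v) (hD : DoublingD v)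
    (hM2 : M2v v < ⊤) :
    ∃ γ : ℝ, 0 < γ ∧ γ < 1 ∧ ∀ r ∈ Set.Ioo (0:ℝ) 1,
      ∫⁻ s in Set.Ioo ((1+r)/2) 1, ENNReal.ofReal ((1-s)^2 / hatw v s) ≤
        ENNReal.ofReal γ * ∫⁻ s in Set.Ioo r 1, ENNReal.ofReal ((1-s)^2 / hatw v s) :=
  statement13_general v hv hM2
end
end

section
/- Let v be a radial weight satisfying M₁(v) = sup_{0<r<1} (∫_r¹ v̂(s)/(1-s)² ds)^{1/2} (∫₀^r 1/v̂(s) ds)^{1/2} < ∞. Then there exists γ = γ(v) ∈ (0,1) such that ∫_{(1+r)/2}^1 v̂(s)/(1-s)² ds ≤ γ · ∫_r^1 v̂(s)/(1-s)² ds for all r ∈ (0,1). -/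
open MeasureTheory Real Set Filter

noncomputable section

/-!
Put `ρ = (1 + r)/2`, `W = v̂/(1-s)²` and `Φ(t) = ∫_t^1 W`. By Cauchy–Schwarz,
`1/2 ≤ ∫_r^ρ ds/(1-s) = ∫_r^ρ √W · √(1/v̂) ≤ (∫_r^ρ W)^{1/2} (∫_r^ρ 1/v̂)^{1/2}`,
and the last factor is at most `(∫_0^ρ 1/v̂)^{1/2} ≤ M₁(v) Φ(ρ)^{-1/2}`. With `k = 4 M₁(v)²`
this gives `Φ(ρ) ≤ k ∫_r^ρ W`, so `Φ(r) ≥ ∫_r^ρ W + Φ(ρ) ≥ (1/k + 1) Φ(ρ)`.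
-/

open scoped ENNReal

theorem ENNReal.rpow_half_mul_rpow_half_sq (a b : ℝ≥0∞) :
    (a ^ (1/2 : ℝ) * b ^ (1/2 : ℝ)) ^ 2 = a * b := by
  rw [← ENNReal.mul_rpow_of_nonneg _ _ (by norm_num), ← ENNReal.rpow_natCast,
    ← ENNReal.rpow_mul]
  norm_num

theorem lintegral_sq_le_lintegral_mul_lintegral {α : Type*} [MeasurableSpace α] {μ : Measure α}
    {f g h : α → ℝ≥0∞} (hf : AEMeasurable f μ) (hg : AEMeasurable g μ)
    (hh : ∀ᵐ x ∂μ, h x ^ 2 ≤ f x * g x) :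
    (∫⁻ x, h x ∂μ) ^ 2 ≤ (∫⁻ x, f x ∂μ) * ∫⁻ x, g x ∂μ := by
  have hpt : ∀ᵐ x ∂μ, h x ≤ f x ^ (1/2 : ℝ) * g x ^ (1/2 : ℝ) := by
    filter_upwards [hh] with x hx
    rw [← ENNReal.pow_le_pow_left_iff two_ne_zero, ENNReal.rpow_half_mul_rpow_half_sq]
    exact hx
  calc (∫⁻ x, h x ∂μ) ^ 2
      ≤ ((∫⁻ x, f x ∂μ) ^ (1/2 : ℝ) * (∫⁻ x, g x ∂μ) ^ (1/2 : ℝ)) ^ 2 := by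
        gcongr
        exact (lintegral_mono_ae hpt).trans
          (ENNReal.lintegral_mul_norm_pow_le hf hg (by norm_num) (by norm_num) (by norm_num))
    _ = _ := ENNReal.rpow_half_mul_rpow_half_sq _ _

theorem setLIntegral_Ioo_add_setLIntegral_Ioo_le (f : ℝ → ℝ≥0∞) {a b c : ℝ}
    (hab : a ≤ b) (hbc : b ≤ c) :
    (∫⁻ x in Ioo a b, f x) + ∫⁻ x in Ioo b c, f x ≤ ∫⁻ x in Ioo a c, f x := by
  have hdisj : Disjoint (Ioo a b) (Ioo b c) :=
    disjoint_left.2 fun _ h₁ h₂ => lt_asymm h₁.2 h₂.1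
  rw [← lintegral_union measurableSet_Ioo hdisj]
  exact lintegral_mono_set
    (union_subset (Ioo_subset_Ioo_right hbc) (Ioo_subset_Ioo_left hab))

theorem inv_two_le_setLIntegral_inv_one_sub {r : ℝ} (hr : r < 1) :
    2⁻¹ ≤ ∫⁻ s in Ioo r ((1 + r) / 2), ENNReal.ofReal (1 / (1 - s)) := by
  have h1r : 0 < 1 - r := by linarith
  calc (2⁻¹ : ℝ≥0∞)
      = ∫⁻ _ in Ioo r ((1 + r) / 2), ENNReal.ofReal (1 / (1 - r)) := by
        rw [setLIntegral_const, Real.volume_Ioo, ← ENNReal.ofReal_mul (by positivity),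
          ← ENNReal.ofReal_ofNat, ← ENNReal.ofReal_inv_of_pos two_pos]
        congr 1
        field_simp
        ring
    _ ≤ _ := by
        refine setLIntegral_mono' measurableSet_Ioo fun s hs => ?_
        gcongr
        · linarith [hs.2]
        · exact hs.1.le

theorem ENNReal.le_four_mul_mul_of_inv_four_le_mul {Φ I J c : ℝ≥0∞}
    (hIJ : 4⁻¹ ≤ I * J) (hΦJ : Φ * J ≤ c) : Φ ≤ 4 * c * I :=
  calc Φ = 4 * 4⁻¹ * Φ := by
        rw [ENNReal.mul_inv_cancel (by norm_num) (by norm_num), one_mul]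
    _ ≤ 4 * (I * J) * Φ := by gcongr
    _ = 4 * (Φ * J) * I := by ring
    _ ≤ 4 * c * I := by gcongr

theorem ENNReal.le_ofReal_div_mul_of_add_le {Φ I Ψ : ℝ≥0∞} {k : ℝ} (hk : 0 ≤ k)
    (hΦ : Φ ≤ ENNReal.ofReal k * I) (hsum : I + Φ ≤ Ψ) :
    Φ ≤ ENNReal.ofReal (k / (k + 1)) * Ψ := by
  have hk1 : 0 < k + 1 := by linarith
  have hmul : ENNReal.ofReal (k + 1) * Φ ≤ ENNReal.ofReal k * Ψ :=
    calc ENNReal.ofReal (k + 1) * Φ = ENNReal.ofReal k * Φ + Φ := by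
          rw [ENNReal.ofReal_add hk zero_le_one, ENNReal.ofReal_one, add_mul, one_mul]
      _ ≤ ENNReal.ofReal k * Φ + ENNReal.ofReal k * I := by gcongr
      _ = ENNReal.ofReal k * (I + Φ) := by ring
      _ ≤ ENNReal.ofReal k * Ψ := by gcongr
  calc Φ = ENNReal.ofReal (k + 1)⁻¹ * (ENNReal.ofReal (k + 1) * Φ) := by
        rw [← mul_assoc, ← ENNReal.ofReal_mul (by positivity), inv_mul_cancel₀ hk1.ne',
          ENNReal.ofReal_one, one_mul]
    _ ≤ ENNReal.ofReal (k + 1)⁻¹ * (ENNReal.ofReal k * Ψ) := by gcongr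
    _ = ENNReal.ofReal (k / (k + 1)) * Ψ := by
        rw [← mul_assoc, ← ENNReal.ofReal_mul (by positivity), inv_mul_eq_div]

theorem mul_le_M1v_sq (v : ℝ → ℝ) {ρ : ℝ} (hρ : ρ ∈ Ioo 0 1) :
    (∫⁻ s in Ioo ρ 1, ENNReal.ofReal (hatw v s / (1 - s) ^ 2)) *
      (∫⁻ s in Ioo 0 ρ, ENNReal.ofReal (1 / hatw v s)) ≤ M1v v ^ 2 := by
  rw [← ENNReal.rpow_half_mul_rpow_half_sq]
  gcongr
  exact le_iSup₂ (f := fun t (_ : t ∈ Ioo (0:ℝ) 1) =>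
    (∫⁻ s in Ioo t 1, ENNReal.ofReal (hatw v s / (1 - s) ^ 2)) ^ (1/2 : ℝ) *
      (∫⁻ s in Ioo 0 t, ENNReal.ofReal (1 / hatw v s)) ^ (1/2 : ℝ)) ρ hρ

theorem continuousOn_hatw {v : ℝ → ℝ} (hv : IntegrableOn v (Ioo 0 1)) :
    ContinuousOn (hatw v) (Icc 0 1) := by
  have hint : IntegrableOn v (uIcc 0 1) := by
    rwa [uIcc_of_le zero_le_one, integrableOn_Icc_iff_integrableOn_Ioo]
  have hcont := intervalIntegral.continuousOn_primitive_interval_left (μ := volume) hint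
  rwa [uIcc_of_le zero_le_one] at hcont

namespace RadialWeight

variable {v : ℝ → ℝ}

theorem hatw_pos_s14 (hv : RadialWeight v) {s : ℝ} (hs : s ∈ Ico 0 1) : 0 < hatw v s := by
  refine intervalIntegral.intervalIntegral_pos_of_pos_on ?_ (fun x hx => ?_) hs.2
  · rw [intervalIntegrable_iff, uIoc_of_le hs.2.le]
    exact (integrableOn_Ioc_iff_integrableOn_Ioo (by simp)).2
      (hv.2.2.mono_set (Ioo_subset_Ioo_left hs.1))
  · exact hv.2.1 x ⟨hs.1.trans hx.1.le, hx.2⟩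

theorem inv_four_le_mul (hv : RadialWeight v) {r : ℝ} (hr : r ∈ Ico 0 1) :
    4⁻¹ ≤ (∫⁻ s in Ioo r ((1 + r) / 2), ENNReal.ofReal (hatw v s / (1 - s) ^ 2)) *
      ∫⁻ s in Ioo r ((1 + r) / 2), ENNReal.ofReal (1 / hatw v s) := by
  have hpos : ∀ s ∈ Ioo r ((1 + r) / 2), 0 < hatw v s ∧ 0 < 1 - s := fun s hs =>
    ⟨hv.hatw_pos_s14 ⟨hr.1.trans hs.1.le, by linarith [hs.2, hr.2]⟩, by linarith [hs.2, hr.2]⟩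
  have hcont : ContinuousOn (hatw v) (Ioo r ((1 + r) / 2)) :=
    (continuousOn_hatw hv.2.2).mono fun s hs => ⟨hr.1.trans hs.1.le, by linarith [hs.2, hr.2]⟩
  set μ := volume.restrict (Ioo r ((1 + r) / 2))
  have hf : AEMeasurable (fun s => ENNReal.ofReal (hatw v s / (1 - s) ^ 2)) μ :=
    ((hcont.div (by fun_prop) fun s hs => (pow_pos (hpos s hs).2 2).ne').aemeasurable
      measurableSet_Ioo).ennreal_ofReal
  have hg : AEMeasurable (fun s => ENNReal.ofReal (1 / hatw v s)) μ :=
    ((continuousOn_const.div hcont fun s hs => (hpos s hs).1.ne').aemeasurable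
      measurableSet_Ioo).ennreal_ofReal
  have hsq : ∀ᵐ s ∂μ, ENNReal.ofReal (1 / (1 - s)) ^ 2 ≤
      ENNReal.ofReal (hatw v s / (1 - s) ^ 2) * ENNReal.ofReal (1 / hatw v s) :=
    ae_restrict_of_forall_mem measurableSet_Ioo fun s hs => by
      obtain ⟨hw, hs1⟩ := hpos s hs
      rw [← ENNReal.ofReal_pow (by positivity), ← ENNReal.ofReal_mul (by positivity)]
      refine le_of_eq (congrArg _ ?_)
      field_simp
  calc (4⁻¹ : ℝ≥0∞) = 2⁻¹ ^ 2 := by rw [← ENNReal.inv_pow]; norm_num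
    _ ≤ (∫⁻ s in Ioo r ((1 + r) / 2), ENNReal.ofReal (1 / (1 - s))) ^ 2 := by
        gcongr
        exact inv_two_le_setLIntegral_inv_one_sub hr.2
    _ ≤ _ := lintegral_sq_le_lintegral_mul_lintegral hf hg hsq

end RadialWeight

/-- inequality (3.6): if `M₁(v) < ∞`, there is `γ ∈ (0,1)` with
`∫_{(1+r)/2}^1 v̂(s)/(1-s)² ds ≤ γ ∫_r^1 v̂(s)/(1-s)² ds` for all `r ∈ (0,1)`. -/
theorem statement14 (v : ℝ → ℝ) (hv : RadialWeight v) (hM1 : M1v v < ⊤) :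
    ∃ γ : ℝ, 0 < γ ∧ γ < 1 ∧ ∀ r ∈ Set.Ioo (0:ℝ) 1,
      ∫⁻ s in Set.Ioo ((1+r)/2) 1, ENNReal.ofReal (hatw v s / (1-s)^2) ≤
        ENNReal.ofReal γ * ∫⁻ s in Set.Ioo r 1, ENNReal.ofReal (hatw v s / (1-s)^2) := by
  -- the `+ 1` keeps `γ = k/(k+1)` positive without having to show `M₁(v) ≠ 0`
  set k : ℝ := 4 * (M1v v).toReal ^ 2 + 1
  have hk : 0 < k := by positivity
  have hM : 4 * M1v v ^ 2 ≤ ENNReal.ofReal k := by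
    rw [← ENNReal.ofReal_toReal hM1.ne, ← ENNReal.ofReal_pow ENNReal.toReal_nonneg,
      ← ENNReal.ofReal_ofNat 4, ← ENNReal.ofReal_mul (by norm_num)]
    exact ENNReal.ofReal_le_ofReal (by linarith)
  refine ⟨k / (k + 1), by positivity, (div_lt_one (by linarith)).2 (by linarith),
    fun r hr => ?_⟩
  have hρ : (1 + r) / 2 ∈ Ioo 0 1 := ⟨by linarith [hr.1], by linarith [hr.2]⟩
  have hJ : (∫⁻ s in Ioo r ((1 + r) / 2), ENNReal.ofReal (1 / hatw v s)) ≤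
      ∫⁻ s in Ioo 0 ((1 + r) / 2), ENNReal.ofReal (1 / hatw v s) :=
    lintegral_mono_set (Ioo_subset_Ioo_left hr.1.le)
  refine ENNReal.le_ofReal_div_mul_of_add_le hk.le ?_
    (setLIntegral_Ioo_add_setLIntegral_Ioo_le _ (by linarith [hr.2]) (by linarith [hr.2]))
  calc _ ≤ 4 * M1v v ^ 2 *
        ∫⁻ s in Ioo r ((1 + r) / 2), ENNReal.ofReal (hatw v s / (1 - s) ^ 2) :=
        ENNReal.le_four_mul_mul_of_inv_four_le_mul
          ((hv.inv_four_le_mul ⟨hr.1.le, hr.2⟩).trans (mul_le_mul_right hJ _))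
          (mul_le_M1v_sq v hρ)
    _ ≤ _ := by gcongr

end
end
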